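/- The five maps w_1, w_2, r_1, r_2, r_3 satisfy the fundamental relations of the affine Weyl group W(F_4^{(1)}): w_1² = w_2² = r_1² = r_2² = r_3² = id; (w_1 w_2)³ = id; (w_1 r_1)² = (w_1 r_2)² = (w_1 r_3)² = id; (w_2 r_1)⁴ = id; (w_2 r_2)² = (w_2 r_3)² = id; (r_1 r_2)³ = id; (r_1 r_3)² = id; and (r_2 r_3)³ = id. -/
import Mathlib


open Finset Function

/-- The Picard lattice `ℤ^10` with basis `H_0, H_1, E_1, …, E_8`
(coordinates `0, 1, 2, …, 9`). -/
abbrev Pic : Type := Fin 10 → ℤ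

/-- The intersection form: `(H_0|H_1) = 1`, `(H_0|H_0) = (H_1|H_1) = 0`,
`(H_0|E_i) = (H_1|E_i) = 0`, `(E_i|E_j) = -δ_{ij}`. -/
def form (v w : Pic) : ℤ :=
  v 0 * w 1 + v 1 * w 0
    - v 2 * w 2 - v 3 * w 3 - v 4 * w 4 - v 5 * w 5
    - v 6 * w 6 - v 7 * w 7 - v 8 * w 8 - v 9 * w 9

/-- The anticanonical class `δ = 2H_0 + 2H_1 - (E_1 + ⋯ + E_8)`. -/
def delta : Pic := ![2, 2, -1, -1, -1, -1, -1, -1, -1, -1]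

/-- The simple roots `β_0, …, β_8`:
`β_0 = E_7 - E_8`, `β_1 = H_1 - H_0`, `β_2 = H_0 - E_1 - E_2`,
`β_3 = E_2 - E_3`, `β_4 = E_3 - E_4`, `β_5 = E_4 - E_5`,
`β_6 = E_5 - E_6`, `β_7 = E_6 - E_7`, `β_8 = E_1 - E_2`. -/
def β : Fin 9 → Pic :=
  ![![0, 0, 0, 0, 0, 0, 0, 0, 1, -1],
    ![-1, 1, 0, 0, 0, 0, 0, 0, 0, 0],
    ![1, 0, -1, -1, 0, 0, 0, 0, 0, 0],
    ![0, 0, 0, 1, -1, 0, 0, 0, 0, 0],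
    ![0, 0, 0, 0, 1, -1, 0, 0, 0, 0],
    ![0, 0, 0, 0, 0, 1, -1, 0, 0, 0],
    ![0, 0, 0, 0, 0, 0, 1, -1, 0, 0],
    ![0, 0, 0, 0, 0, 0, 0, 1, -1, 0],
    ![0, 0, 1, -1, 0, 0, 0, 0, 0, 0]]

/-- The reflection `w_i(v) = v + (v|β_i)·β_i`. -/
def w (i : Fin 9) : Pic → Pic := fun v => v + form v (β i) • β i

/-- `r_1 = w_3 w_4 w_8 w_3`. -/
def r1 : Pic → Pic := w 3 ∘ w 4 ∘ w 8 ∘ w 3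

/-- `r_2 = w_5 w_4 w_6 w_5`. -/
def r2 : Pic → Pic := w 5 ∘ w 4 ∘ w 6 ∘ w 5

/-- `r_3 = w_7 w_6 w_0 w_7`. -/
def r3 : Pic → Pic := w 7 ∘ w 6 ∘ w 0 ∘ w 7

def βc (i : Fin 9) : Pic :=
  ![β i 1, β i 0, -β i 2, -β i 3, -β i 4, -β i 5, -β i 6, -β i 7, -β i 8, -β i 9]

lemma ch_1 : (Fin.succ ((0 : Fin 9)) : Fin 10) = (1 : Fin 10) := rfl
lemma ch_2 : (Fin.succ (Fin.succ ((0 : Fin 8))) : Fin 10) = (2 : Fin 10) := rfl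
lemma ch_3 : (Fin.succ (Fin.succ (Fin.succ ((0 : Fin 7)))) : Fin 10) = (3 : Fin 10) := rfl
lemma ch_4 : (Fin.succ (Fin.succ (Fin.succ (Fin.succ ((0 : Fin 6))))) : Fin 10) = (4 : Fin 10) := rfl
lemma ch_5 : (Fin.succ (Fin.succ (Fin.succ (Fin.succ (Fin.succ ((0 : Fin 5)))))) : Fin 10) = (5 : Fin 10) := rfl
lemma ch_6 : (Fin.succ (Fin.succ (Fin.succ (Fin.succ (Fin.succ (Fin.succ ((0 : Fin 4))))))) : Fin 10) = (6 : Fin 10) := rfl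
lemma ch_7 : (Fin.succ (Fin.succ (Fin.succ (Fin.succ (Fin.succ (Fin.succ (Fin.succ ((0 : Fin 3)))))))) : Fin 10) = (7 : Fin 10) := rfl
lemma ch_8 : (Fin.succ (Fin.succ (Fin.succ (Fin.succ (Fin.succ (Fin.succ (Fin.succ (Fin.succ ((0 : Fin 2))))))))) : Fin 10) = (8 : Fin 10) := rfl
lemma ch_9 : (Fin.succ (Fin.succ (Fin.succ (Fin.succ (Fin.succ (Fin.succ (Fin.succ (Fin.succ (Fin.succ ((0 : Fin 1)))))))))) : Fin 10) = (9 : Fin 10) := rfl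
lemma βc_0 (i : Fin 9) : βc i 0 = β i 1 := rfl
lemma βc_1 (i : Fin 9) : βc i 1 = β i 0 := rfl
lemma βc_2 (i : Fin 9) : βc i 2 = -β i 2 := rfl
lemma βc_3 (i : Fin 9) : βc i 3 = -β i 3 := rfl
lemma βc_4 (i : Fin 9) : βc i 4 = -β i 4 := rfl
lemma βc_5 (i : Fin 9) : βc i 5 = -β i 5 := rfl
lemma βc_6 (i : Fin 9) : βc i 6 = -β i 6 := rfl
lemma βc_7 (i : Fin 9) : βc i 7 = -β i 7 := rfl
lemma βc_8 (i : Fin 9) : βc i 8 = -β i 8 := rfl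
lemma βc_9 (i : Fin 9) : βc i 9 = -β i 9 := rfl

def M (i : Fin 9) : Matrix (Fin 10) (Fin 10) ℤ :=
  1 + Matrix.vecMulVec (β i) (βc i)

lemma w_eq (i : Fin 9) (v : Pic) : w i v = (M i).mulVec v := by
  rw [M, Matrix.add_mulVec, Matrix.one_mulVec]
  funext j
  simp only [w, Pi.add_apply, Pi.smul_apply, smul_eq_mul, Matrix.mulVec,
    dotProduct, Matrix.vecMulVec_apply, form, Fin.sum_univ_succ,
    Fin.sum_univ_zero, ch_1, ch_2, ch_3, ch_4, ch_5, ch_6, ch_7, ch_8, ch_9, βc_0, βc_1, βc_2, βc_3, βc_4, βc_5, βc_6, βc_7, βc_8, βc_9]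
  ring

lemma comp_eq {f g : Pic → Pic} {A B : Matrix (Fin 10) (Fin 10) ℤ}
    (hf : ∀ v, f v = A.mulVec v) (hg : ∀ v, g v = B.mulVec v) :
    ∀ v, (f ∘ g) v = (A * B).mulVec v := by
  intro v
  simp only [Function.comp_apply, hf, hg, Matrix.mulVec_mulVec]

lemma iter_eq {f : Pic → Pic} {A : Matrix (Fin 10) (Fin 10) ℤ}
    (hf : ∀ v, f v = A.mulVec v) :
    ∀ n v, f^[n] v = (A ^ n).mulVec v := by
  intro n
  induction n with
  | zero => intro v; simp [Matrix.one_mulVec]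
  | succ m ih =>
      intro v
      rw [Function.iterate_succ_apply, hf, ih, Matrix.mulVec_mulVec, ← pow_succ]

lemma pow_rel {f g : Pic → Pic} {A B : Matrix (Fin 10) (Fin 10) ℤ}
    (hf : ∀ v, f v = A.mulVec v) (hg : ∀ v, g v = B.mulVec v) (n : ℕ)
    (h : (A * B) ^ n = 1) : (f ∘ g)^[n] = id := by
  funext v
  rw [iter_eq (comp_eq hf hg), h, Matrix.one_mulVec, id_eq]

lemma hr1 : ∀ v, r1 v = ((M 3 * (M 4 * (M 8 * M 3)))).mulVec v :=
  comp_eq (w_eq 3) (comp_eq (w_eq 4) (comp_eq (w_eq 8) (w_eq 3)))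

lemma hr2 : ∀ v, r2 v = ((M 5 * (M 4 * (M 6 * M 5)))).mulVec v :=
  comp_eq (w_eq 5) (comp_eq (w_eq 4) (comp_eq (w_eq 6) (w_eq 5)))

lemma hr3 : ∀ v, r3 v = ((M 7 * (M 6 * (M 0 * M 7)))).mulVec v :=
  comp_eq (w_eq 7) (comp_eq (w_eq 6) (comp_eq (w_eq 0) (w_eq 7)))

set_option maxHeartbeats 4000000 in
/-- `w_1, w_2, r_1, r_2, r_3` satisfy the fundamental relations of the affine
Weyl group `W(F_4^{(1)})`. -/
theorem statement_11 :
    (w 1 ∘ w 1 = id) ∧ (w 2 ∘ w 2 = id) ∧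
    (r1 ∘ r1 = id) ∧ (r2 ∘ r2 = id) ∧ (r3 ∘ r3 = id) ∧
    ((w 1 ∘ w 2)^[3] = id) ∧
    ((w 1 ∘ r1)^[2] = id) ∧ ((w 1 ∘ r2)^[2] = id) ∧ ((w 1 ∘ r3)^[2] = id) ∧
    ((w 2 ∘ r1)^[4] = id) ∧
    ((w 2 ∘ r2)^[2] = id) ∧ ((w 2 ∘ r3)^[2] = id) ∧
    ((r1 ∘ r2)^[3] = id) ∧ ((r1 ∘ r3)^[2] = id) ∧
    ((r2 ∘ r3)^[3] = id) := by
  refine ⟨?_, ?_, ?_, ?_, ?_, ?_, ?_, ?_, ?_, ?_, ?_, ?_, ?_, ?_, ?_⟩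
  · have h := pow_rel (w_eq 1) (w_eq 1) 1 (by rw [pow_one]; decide)
    rw [Function.iterate_one] at h
    exact h
  · have h := pow_rel (w_eq 2) (w_eq 2) 1 (by rw [pow_one]; decide)
    rw [Function.iterate_one] at h
    exact h
  · have h := pow_rel (hr1) (hr1) 1 (by rw [pow_one]; decide)
    rw [Function.iterate_one] at h
    exact h
  · have h := pow_rel (hr2) (hr2) 1 (by rw [pow_one]; decide)
    rw [Function.iterate_one] at h
    exact h
  · have h := pow_rel (hr3) (hr3) 1 (by rw [pow_one]; decide)
    rw [Function.iterate_one] at h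
    exact h
  · exact pow_rel (w_eq 1) (w_eq 2) 3 (by decide)
  · exact pow_rel (w_eq 1) (hr1) 2 (by decide)
  · exact pow_rel (w_eq 1) (hr2) 2 (by decide)
  · exact pow_rel (w_eq 1) (hr3) 2 (by decide)
  · exact pow_rel (w_eq 2) (hr1) 4 (by decide)
  · exact pow_rel (w_eq 2) (hr2) 2 (by decide)
  · exact pow_rel (w_eq 2) (hr3) 2 (by decide)
  · exact pow_rel (hr1) (hr2) 3 (by decide)
  · exact pow_rel (hr1) (hr3) 2 (by decide)
  · exact pow_rel (hr2) (hr3) 3 (by decide)
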